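/- Fix r > 1, reals β > α ≥ 1, a prime p, and a nonnegative integer a_0 such that σ_{-r}(p^{a+1})·α ≤ σ_{-r}(p^a)·β for all integers a ≥ a_0. Then the union over a ∈ ℕ ∪ {∞} with a ≥ a_0 of σ_{-r}(p^a)·[α, β] equals the single interval [σ_{-r}(p^{a_0})·α, (1/(1 - p^{-r}))·β]. -/

import Mathlib

/-!
Put `x = p^{-r} ∈ (0,1)`. Then `σ_{-r}(p^a) = 1 + x + ⋯ + x^a` increases to `(1 - x)⁻¹`, so the
intervals `σ_{-r}(p^a)·[α, β]` have increasing endpoints bounded by `(1 - x)⁻¹·[α, β]`, and the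
hypothesis says that consecutive ones overlap. A point `y ≥ σ_{-r}(p^{a₀})·α` missed by all of
them would therefore lie above every left endpoint, hence above their limit `(1 - x)⁻¹·α`.
-/

noncomputable def sigma' (r : ℝ) (n : ℕ) : ℝ := ∑ d ∈ n.divisors, (d : ℝ) ^ (-r)

open Filter Topology

theorem biUnion_Icc_union_Icc_eq_Icc_of_tendsto {u v : ℕ → ℝ} {l m : ℝ} {a0 : ℕ}
    (hu : Monotone u) (hul : Tendsto u atTop (𝓝 l)) (hvm : ∀ a, v a ≤ m)
    (hchain : ∀ a ≥ a0, u (a + 1) ≤ v a) :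
    (⋃ a : ℕ, ⋃ (_ : a0 ≤ a), Set.Icc (u a) (v a)) ∪ Set.Icc l m = Set.Icc (u a0) m := by
  have hul_ge : ∀ a, u a ≤ l := hu.ge_of_tendsto hul
  ext y
  simp only [Set.mem_union, Set.mem_iUnion, Set.mem_Icc]
  constructor
  · rintro (⟨a, ha, hay, hya⟩ | ⟨hly, hym⟩)
    · exact ⟨(hu ha).trans hay, hya.trans (hvm a)⟩
    · exact ⟨(hul_ge a0).trans hly, hym⟩
  · rintro ⟨ha0y, hym⟩
    by_cases hly : l ≤ y
    · exact Or.inr ⟨hly, hym⟩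
    refine Or.inl (not_forall_not.mp fun hmiss => hly ?_)
    have hbelow : ∀ a, a0 ≤ a → u a ≤ y := by
      intro a ha
      induction a, ha using Nat.le_induction with
      | base => exact ha0y
      | succ n hn ih =>
        have hvy : v n < y := by
          by_contra! hyv
          exact hmiss n ⟨hn, ih, hyv⟩
        exact (hchain n hn).trans hvy.le
    exact le_of_tendsto hul (eventually_atTop.mpr ⟨a0, hbelow⟩)

theorem sigma'_prime_pow (r : ℝ) {p : ℕ} (hp : p.Prime) (a : ℕ) :
    sigma' r (p ^ a) = ∑ i ∈ Finset.range (a + 1), ((p : ℝ) ^ (-r)) ^ i := by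
  rw [sigma', Nat.sum_divisors_prime_pow hp]
  refine Finset.sum_congr rfl fun i _ => ?_
  push_cast
  rw [← Real.rpow_natCast, ← Real.rpow_mul (Nat.cast_nonneg p), mul_comm,
    Real.rpow_mul (Nat.cast_nonneg p), Real.rpow_natCast]

theorem monotone_sigma'_pow (r : ℝ) {p : ℕ} (hp : p ≠ 0) :
    Monotone fun a : ℕ => sigma' r (p ^ a) :=
  fun _ _ hab => Finset.sum_le_sum_of_subset_of_nonneg
    (Nat.divisors_subset_of_dvd (pow_ne_zero _ hp) (pow_dvd_pow p hab))
    fun d _ _ => Real.rpow_nonneg (Nat.cast_nonneg d) _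

theorem tendsto_sigma'_prime_pow {r : ℝ} (hr : 0 < r) {p : ℕ} (hp : p.Prime) :
    Tendsto (fun a : ℕ => sigma' r (p ^ a)) atTop (𝓝 (1 - (p : ℝ) ^ (-r))⁻¹) := by
  have hp1 : (1 : ℝ) < p := by exact_mod_cast hp.one_lt
  have hgeom := hasSum_geometric_of_lt_one (Real.rpow_nonneg (Nat.cast_nonneg p) (-r))
    (Real.rpow_lt_one_of_one_lt_of_neg hp1 (neg_neg_of_pos hr))
  simpa only [sigma'_prime_pow r hp, Function.comp_def] using
    hgeom.tendsto_sum_nat.comp (tendsto_add_atTop_nat 1)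

theorem stmt13 (r α β : ℝ) (hr : 1 < r) (hα : 1 ≤ α) (hαβ : α < β)
    (p : ℕ) (hp : p.Prime) (a0 : ℕ)
    (h : ∀ a ≥ a0, sigma' r (p ^ (a + 1)) * α ≤ sigma' r (p ^ a) * β) :
    ((⋃ a : ℕ, ⋃ (_ : a0 ≤ a), Set.Icc (sigma' r (p ^ a) * α) (sigma' r (p ^ a) * β)) ∪
        Set.Icc ((1 - (p : ℝ) ^ (-r))⁻¹ * α) ((1 - (p : ℝ) ^ (-r))⁻¹ * β)) =
      Set.Icc (sigma' r (p ^ a0) * α) ((1 - (p : ℝ) ^ (-r))⁻¹ * β) := by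
  have hmono := monotone_sigma'_pow r hp.ne_zero
  have hlim := tendsto_sigma'_prime_pow (zero_lt_one.trans hr) hp
  have hα0 : 0 ≤ α := zero_le_one.trans hα
  refine biUnion_Icc_union_Icc_eq_Icc_of_tendsto (hmono.mul_const hα0) (hlim.mul_const α)
    (fun a => ?_) h
  exact mul_le_mul_of_nonneg_right (hmono.ge_of_tendsto hlim a) (hα0.trans hαβ.le)
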